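/- Suppose each gradient ∇g_i is Lipschitz continuous on ℝ^n with constant L, let ω > L/2, and suppose each map x ↦ B_i(x) is continuous with symmetric positive definite values. Let {x^k} ⊂ ℝ^n be defined by x^{k+1} = x^k + d_ω(x^k). If the level set {x ∈ ℝ^n : F_i(x) ≤ F_i(x^0) for all i = 1,…,m} is bounded, then {x^k} has at least one accumulation point, and every accumulation point of {x^k} is a Pareto stationary point. -/

import Mathlib

/-! Since `φ_{ω,y}` is `ω`-strongly convex and vanishes at `0`, its minimiser `d = d_ω(y)`
satisfies `θ_y(d) ≤ -ω‖d‖²`; together with the descent lemma for `g_i` this gives the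
sufficient decrease `F_i(y + d) ≤ F_i(y) - (ω - L/2)‖d‖²` for every `i`. So the iterates stay in
the bounded level set and cluster, `F_i(x^k)` decreases to `F_i(a)` at any cluster point `a`, and
the steps `d_ω(x^k)` tend to `0`. Passing to the limit in `φ_{ω,x^k}(d_ω(x^k)) ≤ φ_{ω,x^k}(z)`
gives `φ_{ω,a} ≥ 0`; were all `F_i'(a; d) < 0`, then `φ_{ω,a}(t d) < 0` for small `t > 0`. -/

open Filter Topology
open scoped RealInnerProductSpace

noncomputable section

/-- `Euc n` is Euclidean `n`-space `ℝ^n`. -/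
abbrev Euc (n : ℕ) := EuclideanSpace ℝ (Fin n)

/-- `HasDirDeriv f x d D` : the one-sided directional derivative of `f` at `x`
in direction `d` exists and equals `D`, i.e. `(f (x + α • d) - f x)/α → D` as `α → 0⁺`. -/
def HasDirDeriv {n : ℕ} (f : Euc n → ℝ) (x d : Euc n) (D : ℝ) : Prop :=
  Filter.Tendsto (fun α : ℝ => (f (x + α • d) - f x) / α)
    (nhdsWithin 0 (Set.Ioi 0)) (nhds D)

/-- `x` is Pareto stationary for the objectives `F i`:
for every direction `d`, `max_i F_i'(x; d) ≥ 0`, i.e. some objective has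
nonnegative directional derivative in direction `d`. -/
def ParetoStationary {n m : ℕ} (F : Fin m → Euc n → ℝ) (x : Euc n) : Prop :=
  ∀ d : Euc n, ∃ i : Fin m, ∃ D : ℝ, HasDirDeriv (F i) x d D ∧ 0 ≤ D

/-- `θ_x(d) = max_i { ⟪∇g_i(x), d⟫ + ½⟪d, B_i(x) d⟫ + h_i(x+d) - h_i(x) }`. -/
def theta {n m : ℕ} (g h : Fin m → Euc n → ℝ)
    (B : Fin m → Euc n → (Euc n →L[ℝ] Euc n)) (x d : Euc n) : ℝ :=
  ⨆ i : Fin m, (⟪gradient (g i) x, d⟫ + (1 / 2) * ⟪d, B i x d⟫ + h i (x + d) - h i x)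

/-- `φ_{ω,x}(d) = θ_x(d) + (ω/2)‖d‖²`. -/
def phi {n m : ℕ} (g h : Fin m → Euc n → ℝ)
    (B : Fin m → Euc n → (Euc n →L[ℝ] Euc n)) (ω : ℝ) (x d : Euc n) : ℝ :=
  theta g h B x d + (ω / 2) * ‖d‖ ^ 2

open Set

section InnerProductSpace

variable {E : Type*} [NormedAddCommGroup E] [InnerProductSpace ℝ E]

lemma convexOn_inner_apply_self {A : E →L[ℝ] E} (hA : ∀ d, 0 ≤ ⟪d, A d⟫) :
    ConvexOn ℝ univ fun d => ⟪d, A d⟫ := by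
  refine ⟨convex_univ, fun u _ v _ a b ha hb hab => ?_⟩
  have gap : a * ⟪u, A u⟫ + b * ⟪v, A v⟫ - ⟪a • u + b • v, A (a • u + b • v)⟫
      = a * b * ⟪u - v, A (u - v)⟫ := by
    obtain rfl := eq_sub_of_add_eq hab
    simp only [map_add, map_sub, map_smul, inner_add_left, inner_add_right, inner_sub_left,
      inner_sub_right, real_inner_smul_left, real_inner_smul_right]
    ring
  simp only [smul_eq_mul]
  linarith [mul_nonneg (mul_nonneg ha hb) (hA (u - v))]

lemma StrongConvexOn.add_sq_norm_sub_le_of_isMinOn {s : Set E} {f : E → ℝ} {m : ℝ} {u z : E}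
    (hf : StrongConvexOn s m f) (hmin : IsMinOn f s u) (hu : u ∈ s) (hz : z ∈ s) :
    f u + m / 2 * ‖z - u‖ ^ 2 ≤ f z := by
  have along_segment : ∀ t ∈ Ioo (0 : ℝ) 1, f u + m / 2 * (1 - t) * ‖z - u‖ ^ 2 ≤ f z := by
    rintro t ⟨ht0, ht1⟩
    have hconv := hf.2 hu hz (sub_nonneg.2 ht1.le) ht0.le (sub_add_cancel 1 t)
    have hle : f u ≤ f ((1 - t) • u + t • z) :=
      hmin (hf.1 hu hz (sub_nonneg.2 ht1.le) ht0.le (sub_add_cancel 1 t))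
    rw [norm_sub_rev, smul_eq_mul, smul_eq_mul] at hconv
    have : t * (f u + m / 2 * (1 - t) * ‖z - u‖ ^ 2) ≤ t * f z := by nlinarith
    exact le_of_mul_le_mul_left this ht0
  have hlim : Tendsto (fun t : ℝ => f u + m / 2 * (1 - t) * ‖z - u‖ ^ 2) (𝓝[>] 0)
      (𝓝 (f u + m / 2 * ‖z - u‖ ^ 2)) :=
    ((Continuous.tendsto' (by fun_prop) 0 _ (by ring)).mono_left nhdsWithin_le_nhds)
  exact le_of_tendsto hlim (eventually_of_mem (Ioo_mem_nhdsGT zero_lt_one) along_segment)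

variable [CompleteSpace E]

lemma hasDerivAt_apply_add_smul {f : E → ℝ} {y d : E} {t : ℝ}
    (hf : DifferentiableAt ℝ f (y + t • d)) :
    HasDerivAt (fun s : ℝ => f (y + s • d)) ⟪gradient f (y + t • d), d⟫ t := by
  have hline : HasDerivAt (fun s : ℝ => y + s • d) d t := by
    simpa using ((hasDerivAt_id t).smul_const d).const_add y
  simpa [InnerProductSpace.toDual_apply_apply, Function.comp_def] using
    hf.hasGradientAt.hasFDerivAt.comp_hasDerivAt t hline

lemma apply_add_le_of_lipschitzWith_gradient {f : E → ℝ} (hf : Differentiable ℝ f) {L : NNReal}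
    (hL : LipschitzWith L (gradient f)) (y d : E) :
    f (y + d) ≤ f y + ⟪gradient f y, d⟫ + L / 2 * ‖d‖ ^ 2 := by
  have hderiv (t : ℝ) := hasDerivAt_apply_add_smul (y := y) (d := d) (t := t) (hf _)
  have bound : ∀ t ∈ Ico (0 : ℝ) 1,
      ⟪gradient f (y + t • d), d⟫ ≤ ⟪gradient f y, d⟫ + L * t * ‖d‖ ^ 2 := by
    rintro t ⟨ht0, -⟩
    have hlip : ‖gradient f (y + t • d) - gradient f y‖ ≤ L * (t * ‖d‖) := by
      simpa [dist_eq_norm, norm_smul, abs_of_nonneg ht0] using hL.dist_le_mul (y + t • d) y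
    calc ⟪gradient f (y + t • d), d⟫
        = ⟪gradient f y, d⟫ + ⟪gradient f (y + t • d) - gradient f y, d⟫ := by
          rw [inner_sub_left]; ring
      _ ≤ ⟪gradient f y, d⟫ + ‖gradient f (y + t • d) - gradient f y‖ * ‖d‖ := by
          gcongr; exact real_inner_le_norm _ _
      _ ≤ ⟪gradient f y, d⟫ + L * (t * ‖d‖) * ‖d‖ := by gcongr
      _ = ⟪gradient f y, d⟫ + L * t * ‖d‖ ^ 2 := by ring
  have hbarrier (t : ℝ) :
      HasDerivAt (fun s : ℝ => f y + s * ⟪gradient f y, d⟫ + L / 2 * s ^ 2 * ‖d‖ ^ 2)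
      (⟪gradient f y, d⟫ + L * t * ‖d‖ ^ 2) t := by
    refine ((((hasDerivAt_id t).mul_const ⟪gradient f y, d⟫).const_add (f y)).add
      (((hasDerivAt_pow 2 t).const_mul (L / 2 : ℝ)).mul_const (‖d‖ ^ 2))).congr_deriv ?_
    simp only [Nat.cast_ofNat]
    ring
  have := image_le_of_deriv_right_le_deriv_boundary
    (fun t _ => (hderiv t).continuousAt.continuousWithinAt)
    (fun t _ => (hderiv t).hasDerivWithinAt) (by simp)
    (fun t _ => (hbarrier t).continuousAt.continuousWithinAt)
    (fun t _ => (hbarrier t).hasDerivWithinAt) bound (right_mem_Icc.2 zero_le_one)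
  simpa using this

end InnerProductSpace

lemma convexOn_ciSup_of_finite {ι E : Type*} [Finite ι] [Nonempty ι] [AddCommGroup E]
    [Module ℝ E] {s : Set E} {f : ι → E → ℝ} (hf : ∀ i, ConvexOn ℝ s (f i)) :
    ConvexOn ℝ s fun x => ⨆ i, f i x := by
  refine ⟨(hf (Classical.arbitrary ι)).1, fun x hx y hy a b ha hb hab => ciSup_le fun i => ?_⟩
  have hbdd (z : E) : BddAbove (range fun i => f i z) := (finite_range _).bddAbove
  calc f i (a • x + b • y) ≤ a * f i x + b * f i y := (hf i).2 hx hy ha hb hab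
    _ ≤ a * (⨆ j, f j x) + b * ⨆ j, f j y := by gcongr <;> exact le_ciSup (hbdd _) i

lemma HasDerivWithinAt.eventually_lt_nhdsGT {f : ℝ → ℝ} {D x : ℝ}
    (hf : HasDerivWithinAt f D (Ioi x) x) (hD : D < 0) : ∀ᶠ t in 𝓝[>] x, f t < f x := by
  rw [hasDerivWithinAt_iff_tendsto_slope' (s := Ioi x) (x := x) (lt_irrefl x)] at hf
  filter_upwards [hf.eventually_lt_const hD, self_mem_nhdsWithin] with t hslope ht
  rw [slope_def_field] at hslope
  linarith [(div_lt_iff₀ (sub_pos.2 ht)).1 hslope]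

lemma continuous_ciSup_of_fintype {ι X : Type*} [Fintype ι] [Nonempty ι] [TopologicalSpace X]
    {f : ι → X → ℝ} (hf : ∀ i, Continuous (f i)) : Continuous fun x => ⨆ i, f i x := by
  simp_rw [← Finset.sup'_univ_eq_ciSup]
  exact Continuous.finset_sup'_apply Finset.univ_nonempty fun i _ => hf i

lemma Antitone.tendsto_of_mapClusterPt {u : ℕ → ℝ} {c : ℝ} (hu : Antitone u)
    (hc : MapClusterPt c atTop u) : Tendsto u atTop (𝓝 c) := by
  obtain ⟨ψ, hψ, hlim⟩ := hc.tendsto_subseq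
  rcases tendsto_atTop_of_antitone hu with hbot | ⟨l, hl⟩
  · exact absurd hlim (not_tendsto_nhds_of_tendsto_atBot (hbot.comp hψ.tendsto_atTop) c)
  · rwa [tendsto_nhds_unique (hl.comp hψ.tendsto_atTop) hlim] at hl

lemma tendsto_zero_of_mul_sq_norm_le_sub {E : Type*} [SeminormedAddCommGroup E] {u : ℕ → ℝ}
    {v : ℕ → E} {c l : ℝ} (hc : 0 < c) (hu : Tendsto u atTop (𝓝 l))
    (hv : ∀ k, c * ‖v k‖ ^ 2 ≤ u k - u (k + 1)) : Tendsto v atTop (𝓝 0) := by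
  have hgap : Tendsto (fun k => (u k - u (k + 1)) / c) atTop (𝓝 0) := by
    simpa using (hu.sub (hu.comp (tendsto_add_atTop_nat 1))).div_const c
  have hsq : Tendsto (fun k => ‖v k‖ ^ 2) atTop (𝓝 0) :=
    squeeze_zero (fun k => by positivity) (fun k => by rw [le_div_iff₀ hc]; linarith [hv k]) hgap
  rw [tendsto_zero_iff_norm_tendsto_zero]
  simpa [Real.sqrt_sq (norm_nonneg _)] using hsq.sqrt

lemma hasDirDeriv_iff_hasDerivWithinAt {n : ℕ} {f : Euc n → ℝ} {x d : Euc n} {D : ℝ} :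
    HasDirDeriv f x d D ↔ HasDerivWithinAt (fun t : ℝ => f (x + t • d)) D (Ioi 0) 0 := by
  rw [hasDerivWithinAt_iff_tendsto_slope' (s := Ioi 0) (x := 0) (lt_irrefl 0), HasDirDeriv]
  refine tendsto_congr fun t => ?_
  simp only [slope_def_field, sub_zero, zero_smul, add_zero]

lemma ConvexOn.exists_hasDirDeriv {n : ℕ} {f : Euc n → ℝ} (hf : ConvexOn ℝ univ f) (x d : Euc n) :
    ∃ D, HasDirDeriv f x d D := by
  have hline : ConvexOn ℝ univ fun t : ℝ => f (x + t • d) := by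
    simpa [Function.comp_def, AffineMap.lineMap_apply, add_comm] using
      hf.comp_affineMap (AffineMap.lineMap x (x + d))
  exact ⟨_, hasDirDeriv_iff_hasDerivWithinAt.2
    (hline.hasDerivWithinAt_rightDeriv_of_mem_interior (by simp))⟩

section ProximalQuasiNewton

variable {n m : ℕ} {g h : Fin m → Euc n → ℝ} {B : Fin m → Euc n → (Euc n →L[ℝ] Euc n)} {ω : ℝ}

variable (g h B) in
def thetaTerm (i : Fin m) (x d : Euc n) : ℝ :=
  ⟪gradient (g i) x, d⟫ + (1 / 2) * ⟪d, B i x d⟫ + h i (x + d) - h i x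

lemma theta_eq_ciSup_thetaTerm (x d : Euc n) :
    theta g h B x d = ⨆ i, thetaTerm g h B i x d := rfl

lemma thetaTerm_le_theta (i : Fin m) (x d : Euc n) :
    thetaTerm g h B i x d ≤ theta g h B x d := by
  rw [theta_eq_ciSup_thetaTerm]
  exact le_ciSup (f := fun j => thetaTerm g h B j x d) (finite_range _).bddAbove i

lemma phi_zero [Nonempty (Fin m)] (x : Euc n) : phi g h B ω x 0 = 0 := by
  simp [phi, theta_eq_ciSup_thetaTerm, thetaTerm]

lemma convexOn_thetaTerm {i : Fin m} {x : Euc n} (hh : ConvexOn ℝ univ (h i))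
    (hB : ∀ d, 0 ≤ ⟪d, B i x d⟫) : ConvexOn ℝ univ (thetaTerm g h B i x) := by
  have hlin : ConvexOn ℝ univ fun d => ⟪gradient (g i) x, d⟫ :=
    (innerₛₗ ℝ (gradient (g i) x)).convexOn convex_univ
  have hquad := (convexOn_inner_apply_self hB).smul (by norm_num : (0 : ℝ) ≤ 1 / 2)
  have hshift : ConvexOn ℝ univ fun d => h i (x + d) := by
    simpa [Function.comp_def] using hh.translate_right x
  refine (((hlin.add hquad).add hshift).add_const (-h i x)).congr fun d _ => ?_
  simp only [thetaTerm, Pi.add_apply, smul_eq_mul]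
  ring

lemma strongConvexOn_phi [Nonempty (Fin m)] {x : Euc n} (hh : ∀ i, ConvexOn ℝ univ (h i))
    (hB : ∀ i d, 0 ≤ ⟪d, B i x d⟫) : StrongConvexOn univ ω (phi g h B ω x) := by
  rw [strongConvexOn_iff_convex]
  simp only [phi, add_sub_cancel_right, theta_eq_ciSup_thetaTerm]
  exact convexOn_ciSup_of_finite fun i => convexOn_thetaTerm (hh i) (hB i)

lemma theta_le_of_isMinOn [Nonempty (Fin m)] {x u : Euc n} (hh : ∀ i, ConvexOn ℝ univ (h i))
    (hB : ∀ i d, 0 ≤ ⟪d, B i x d⟫) (hu : IsMinOn (phi g h B ω x) univ u) :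
    theta g h B x u ≤ -(ω * ‖u‖ ^ 2) := by
  have := (strongConvexOn_phi hh hB).add_sq_norm_sub_le_of_isMinOn hu trivial (mem_univ 0)
  rw [phi_zero, phi, zero_sub, norm_neg] at this
  linarith

lemma add_le_sub_of_isMinOn_phi [Nonempty (Fin m)] {x u : Euc n} {L : NNReal}
    (hg : ∀ i, Differentiable ℝ (g i)) (hL : ∀ i, LipschitzWith L (gradient (g i)))
    (hh : ∀ i, ConvexOn ℝ univ (h i)) (hB : ∀ i d, 0 ≤ ⟪d, B i x d⟫)
    (hu : IsMinOn (phi g h B ω x) univ u) (i : Fin m) :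
    g i (x + u) + h i (x + u) ≤ g i x + h i x - (ω - L / 2) * ‖u‖ ^ 2 := by
  have hdescent := apply_add_le_of_lipschitzWith_gradient (hg i) (hL i) x u
  have hterm := thetaTerm_le_theta (g := g) (h := h) (B := B) i x u
  have htheta := theta_le_of_isMinOn hh hB hu
  have hquad := hB i u
  simp only [thetaTerm] at hterm
  linarith

lemma continuous_phi [Nonempty (Fin m)] (hg : ∀ i, Continuous (gradient (g i)))
    (hh : ∀ i, Continuous (h i)) (hB : ∀ i, Continuous (B i)) :
    Continuous fun p : Euc n × Euc n => phi g h B ω p.1 p.2 := by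
  have hterm (i : Fin m) : Continuous fun p : Euc n × Euc n => thetaTerm g h B i p.1 p.2 := by
    refine ((((hg i).comp continuous_fst).inner continuous_snd).add
      (continuous_const.mul (continuous_snd.inner
        (((hB i).comp continuous_fst).clm_apply continuous_snd)))).add
      ((hh i).comp (continuous_fst.add continuous_snd)) |>.sub ((hh i).comp continuous_fst)
  simp only [phi, theta_eq_ciSup_thetaTerm]
  exact (continuous_ciSup_of_fintype hterm).add (by fun_prop)

lemma phi_nonneg_of_tendsto [Nonempty (Fin m)]
    (hphi : Continuous fun p : Euc n × Euc n => phi g h B ω p.1 p.2) {dir : Euc n → Euc n}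
    (hmin : ∀ y d, phi g h B ω y (dir y) ≤ phi g h B ω y d) {u : ℕ → Euc n} {a : Euc n}
    (hu : Tendsto u atTop (𝓝 a)) (hdir : Tendsto (fun k => dir (u k)) atTop (𝓝 0)) (z : Euc n) :
    0 ≤ phi g h B ω a z := by
  have hlhs := (hphi.tendsto (a, 0)).comp (hu.prodMk_nhds hdir)
  have hrhs := (hphi.tendsto (a, z)).comp (hu.prodMk_nhds (tendsto_const_nhds (x := z)))
  simpa [phi_zero] using le_of_tendsto_of_tendsto' hlhs hrhs fun k => hmin (u k) z

lemma paretoStationary_of_phi_nonneg [Nonempty (Fin m)] {a : Euc n}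
    (hg : ∀ i, DifferentiableAt ℝ (g i) a) (hh : ∀ i, ConvexOn ℝ univ (h i))
    (hphi : ∀ z, 0 ≤ phi g h B ω a z) : ParetoStationary (fun i y => g i y + h i y) a := by
  intro d
  choose Dh hDh using fun i => (hh i).exists_hasDirDeriv a d
  have hline (i : Fin m) : HasDerivWithinAt (fun t : ℝ => g i (a + t • d))
      ⟪gradient (g i) a, d⟫ (Ioi 0) 0 := by
    simpa using (hasDerivAt_apply_add_smul (f := g i) (y := a) (d := d) (t := 0)
      (by simpa using hg i)).hasDerivWithinAt
  by_contra! hneg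
  have hslope (i : Fin m) : ⟪gradient (g i) a, d⟫ + Dh i < 0 :=
    hneg i _ (hasDirDeriv_iff_hasDerivWithinAt.2
      ((hline i).add (hasDirDeriv_iff_hasDerivWithinAt.1 (hDh i))))
  have hmodel (i : Fin m) : HasDerivWithinAt
      (fun t : ℝ => thetaTerm g h B i a (t • d) + ω / 2 * ‖t • d‖ ^ 2)
      (⟪gradient (g i) a, d⟫ + Dh i) (Ioi 0) 0 := by
    have hfun : (fun t : ℝ => thetaTerm g h B i a (t • d) + ω / 2 * ‖t • d‖ ^ 2) = fun t =>
        t * ⟪gradient (g i) a, d⟫ + t ^ 2 * (1 / 2 * ⟪d, B i a d⟫ + ω / 2 * ‖d‖ ^ 2)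
          + (h i (a + t • d) - h i a) := by
      funext t
      simp only [thetaTerm, map_smul, real_inner_smul_left, real_inner_smul_right, norm_smul,
        Real.norm_eq_abs, mul_pow, sq_abs]
      ring
    rw [hfun]
    refine ((((hasDerivAt_id (0 : ℝ)).mul_const _).add ((hasDerivAt_pow 2 (0 : ℝ)).mul_const _)
      ).hasDerivWithinAt.add ((hasDirDeriv_iff_hasDerivWithinAt.1 (hDh i)).sub_const _)
      ).congr_deriv ?_
    simp
  have hbelow : ∀ᶠ t in 𝓝[>] (0 : ℝ), ∀ i,
      thetaTerm g h B i a (t • d) + ω / 2 * ‖t • d‖ ^ 2 < 0 :=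
    eventually_all.2 fun i => by
      simpa [thetaTerm] using (hmodel i).eventually_lt_nhdsGT (hslope i)
  obtain ⟨t, ht⟩ := hbelow.exists
  obtain ⟨i, hi⟩ := exists_eq_ciSup_of_finite (f := fun i => thetaTerm g h B i a (t • d))
  have := hphi (t • d)
  rw [phi, theta_eq_ciSup_thetaTerm, ← hi] at this
  linarith [ht i]

end ProximalQuasiNewton

theorem algorithm_two_bounded_level_set_general
    {n m : ℕ} (g h : Fin m → Euc n → ℝ)
    (B : Fin m → Euc n → (Euc n →L[ℝ] Euc n))
    (hm : 0 < m)
    (hg : ∀ i, ContDiff ℝ 2 (g i))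
    (hh : ∀ i, ConvexOn ℝ Set.univ (h i))
    (hBpos : ∀ i x (d : Euc n), d ≠ 0 → 0 < ⟪d, B i x d⟫)
    (hBcont : ∀ i, Continuous (fun x => B i x))
    (L : NNReal) (hL : ∀ i, LipschitzWith L (gradient (g i)))
    (ω : ℝ) (hω : (L : ℝ) / 2 < ω)
    (dω : Euc n → Euc n)
    (hmin : ∀ y d, phi g h B ω y (dω y) ≤ phi g h B ω y d)
    (x : ℕ → Euc n)
    (hstep : ∀ k, x (k + 1) = x k + dω (x k))
    (hlevel : Bornology.IsBounded
      {y : Euc n | ∀ i, g i y + h i y ≤ g i (x 0) + h i (x 0)}) :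
    (∃ a : Euc n, MapClusterPt a atTop x) ∧
      ∀ a : Euc n, MapClusterPt a atTop x →
        ParetoStationary (fun i y => g i y + h i y) a := by
  have : Nonempty (Fin m) := Fin.pos_iff_nonempty.1 hm
  have hgd (i : Fin m) : Differentiable ℝ (g i) := (hg i).differentiable two_ne_zero
  have hhc (i : Fin m) : Continuous (h i) := continuousOn_univ.1 ((hh i).continuousOn isOpen_univ)
  have hB (i : Fin m) (y d : Euc n) : 0 ≤ ⟪d, B i y d⟫ := by
    rcases eq_or_ne d 0 with rfl | hd
    · simp
    · exact (hBpos i y d hd).le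
  have hdecrease (k : ℕ) (i : Fin m) : g i (x (k + 1)) + h i (x (k + 1))
      ≤ g i (x k) + h i (x k) - (ω - L / 2) * ‖dω (x k)‖ ^ 2 := by
    rw [hstep]
    exact add_le_sub_of_isMinOn_phi hgd hL hh (fun i => hB i (x k))
      (isMinOn_univ_iff.2 (hmin _)) i
  have hanti (i : Fin m) : Antitone fun k => g i (x k) + h i (x k) :=
    antitone_nat_of_succ_le fun k => (hdecrease k i).trans
      (sub_le_self _ (mul_nonneg (sub_pos.2 hω).le (sq_nonneg _)))
  refine ⟨?_, fun a ha => ?_⟩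
  · obtain ⟨a, -, ψ, hψ, hxψ⟩ := tendsto_subseq_of_bounded hlevel fun k i => hanti i k.zero_le
    exact ⟨a, MapClusterPt.of_comp hψ.tendsto_atTop hxψ.mapClusterPt⟩
  let i₀ : Fin m := ⟨0, hm⟩
  have hvalues : Tendsto (fun k => g i₀ (x k) + h i₀ (x k)) atTop (𝓝 (g i₀ a + h i₀ a)) :=
    (hanti i₀).tendsto_of_mapClusterPt
      (ha.continuousAt_comp (((hgd i₀).continuous.add (hhc i₀)).continuousAt))
  have hsteps : Tendsto (fun k => dω (x k)) atTop (𝓝 0) :=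
    tendsto_zero_of_mul_sq_norm_le_sub (sub_pos.2 hω) hvalues fun k => by
      linarith [hdecrease k i₀]
  obtain ⟨ψ, hψ, hxψ⟩ := ha.tendsto_subseq
  exact paretoStationary_of_phi_nonneg (fun i => (hgd i).differentiableAt) hh
    (phi_nonneg_of_tendsto (continuous_phi (fun i => (hL i).continuous) hhc hBcont) hmin hxψ
      (hsteps.comp hψ.tendsto_atTop))

/-- with a bounded level set, the sequence generated by the
proximal quasi-Newton method without line searches has accumulation points,
and all of them are Pareto stationary. -/
theorem algorithm_two_bounded_level_set
    {n m : ℕ} (g h : Fin m → Euc n → ℝ)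
    (B : Fin m → Euc n → (Euc n →L[ℝ] Euc n))
    (hm : 0 < m)
    (hg : ∀ i, ContDiff ℝ 2 (g i))
    (hsc : ∀ i, ∃ a : ℝ, 0 < a ∧ ∀ x y : Euc n,
      a * ‖x - y‖ ^ 2 ≤ ⟪gradient (g i) x - gradient (g i) y, x - y⟫)
    (hh : ∀ i, ConvexOn ℝ Set.univ (h i))
    (hBsymm : ∀ i x (u v : Euc n), ⟪B i x u, v⟫ = ⟪u, B i x v⟫)
    (hBpos : ∀ i x (d : Euc n), d ≠ 0 → 0 < ⟪d, B i x d⟫)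
    (hBcont : ∀ i, Continuous (fun x => B i x))
    (L : NNReal) (hL : ∀ i, LipschitzWith L (gradient (g i)))
    (ω : ℝ) (hω : (L : ℝ) / 2 < ω)
    (dω : Euc n → Euc n)
    (hmin : ∀ y d, phi g h B ω y (dω y) ≤ phi g h B ω y d)
    (huniq : ∀ y d, (∀ d', phi g h B ω y d ≤ phi g h B ω y d') → d = dω y)
    (x : ℕ → Euc n)
    (hstep : ∀ k, x (k + 1) = x k + dω (x k))
    (hlevel : Bornology.IsBounded
      {y : Euc n | ∀ i, g i y + h i y ≤ g i (x 0) + h i (x 0)}) :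
    (∃ a : Euc n, MapClusterPt a atTop x) ∧
      ∀ a : Euc n, MapClusterPt a atTop x →
        ParetoStationary (fun i y => g i y + h i y) a :=
  algorithm_two_bounded_level_set_general g h B hm hg hh hBpos hBcont L hL ω hω dω hmin x hstep
    hlevel
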